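/- arXiv:1907.01593 — 2 statements merged into one kernel-verified Lean document; each statement's English description precedes it below -/
import Mathlib

section
/- For every real number t, the cubic uniform B-spline B³ is differentiable at t with derivative B²(t + 1/2) − B²(t − 1/2), where B² is the quadratic uniform B-spline. -/
/-- The quadratic uniform B-spline. -/
noncomputable def B2 (t : ℝ) : ℝ :=
  if |t| ≤ 1/2 then 3/4 - t^2
  else if |t| ≤ 3/2 then (1/2) * (3/2 - |t|)^2
  else 0

/-- The cubic uniform B-spline. -/
noncomputable def B3 (t : ℝ) : ℝ :=
  if |t| ≤ 1 then (1/6) * (4 - 3*t^2*(2 - |t|))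
  else if |t| ≤ 2 then (1/6) * (2 - |t|)^3
  else 0

/-! Both splines are central differences of truncated powers: `6 B³ = δ⁴ (x₊³)` and
`2 B² = δ³ (x₊²)`, where `δ` is the central difference of step one. The truncated cube is
differentiable with derivative `3 x₊²`, differentiation commutes with `δ`, and
`δ⁴ f (t) = δ³ f (t + 1/2) - δ³ f (t - 1/2)`. -/

open Set Topology

theorem hasDerivAt_of_eqOn_Iic_of_eqOn_Ici {E : Type*} [NormedAddCommGroup E] [NormedSpace ℝ E]
    {f g h : ℝ → E} {a : ℝ} {f' : E}
    (hg : HasDerivAt g f' a) (hh : HasDerivAt h f' a)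
    (hfg : EqOn f g (Iic a)) (hfh : EqOn f h (Ici a)) : HasDerivAt f f' a := by
  have := (hg.hasDerivWithinAt.congr hfg (hfg self_mem_Iic)).union
    (hh.hasDerivWithinAt.congr hfh (hfh self_mem_Ici))
  rwa [Iic_union_Ici, hasDerivWithinAt_univ] at this

theorem hasDerivAt_posPart_pow {n : ℕ} (hn : n ≠ 0) (x : ℝ) :
    HasDerivAt (fun y : ℝ => y⁺ ^ (n + 1)) ((n + 1) * x⁺ ^ n) x := by
  rcases lt_trichotomy x 0 with hx | rfl | hx
  · have hzero : (fun y : ℝ => y⁺ ^ (n + 1)) =ᶠ[𝓝 x] fun _ => 0 := by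
      filter_upwards [Iio_mem_nhds hx] with y (hy : y < 0)
      simp [posPart_of_nonpos hy.le]
    simpa [posPart_of_nonpos hx.le, hn] using (hasDerivAt_const x 0).congr_of_eventuallyEq hzero
  · have hpow : HasDerivAt (fun y : ℝ => y ^ (n + 1)) 0 0 := by
      simpa [hn] using hasDerivAt_pow (n + 1) (0 : ℝ)
    refine (hasDerivAt_of_eqOn_Iic_of_eqOn_Ici (hasDerivAt_const (0 : ℝ) (0 : ℝ)) hpow
      (fun y (hy : y ≤ 0) => ?_) (fun y (hy : 0 ≤ y) => ?_)).congr_deriv (by simp [hn])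
    · simp [posPart_of_nonpos hy]
    · simp [posPart_of_nonneg hy]
  · have hpow : (fun y : ℝ => y⁺ ^ (n + 1)) =ᶠ[𝓝 x] fun y => y ^ (n + 1) := by
      filter_upwards [Ioi_mem_nhds hx] with y (hy : 0 < y)
      simp [posPart_of_nonneg hy.le]
    simpa [posPart_of_nonneg hx.le] using (hasDerivAt_pow (n + 1) x).congr_of_eventuallyEq hpow

noncomputable def thirdCentralDiff (f : ℝ → ℝ) (t : ℝ) : ℝ :=
  f (t + 3/2) - 3 * f (t + 1/2) + 3 * f (t - 1/2) - f (t - 3/2)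

noncomputable def fourthCentralDiff (f : ℝ → ℝ) (t : ℝ) : ℝ :=
  f (t + 2) - 4 * f (t + 1) + 6 * f t - 4 * f (t - 1) + f (t - 2)

theorem thirdCentralDiff_add_half_sub_thirdCentralDiff_sub_half (f : ℝ → ℝ) (t : ℝ) :
    thirdCentralDiff f (t + 1/2) - thirdCentralDiff f (t - 1/2) = fourthCentralDiff f t := by
  simp only [thirdCentralDiff, fourthCentralDiff]
  ring_nf

theorem hasDerivAt_fourthCentralDiff {f f' : ℝ → ℝ} (hf : ∀ x, HasDerivAt f (f' x) x) (t : ℝ) :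
    HasDerivAt (fourthCentralDiff f) (fourthCentralDiff f' t) t :=
  (((((hf _).comp_add_const t 2).sub (((hf _).comp_add_const t 1).const_mul 4)).add
    ((hf t).const_mul 6)).sub (((hf _).comp_sub_const t 1).const_mul 4)).add
    ((hf _).comp_sub_const t 2)

theorem B2_of_abs_le_half {x : ℝ} (h : |x| ≤ 1/2) : B2 x = 3/4 - x^2 := by
  rw [B2, if_pos h]

theorem B2_of_half_le_abs_of_abs_le_three_halves {x : ℝ} (h₁ : 1/2 ≤ |x|) (h₂ : |x| ≤ 3/2) :
    B2 x = (1/2) * (3/2 - |x|)^2 := by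
  rcases h₁.eq_or_lt with hx | hx
  · rw [B2, if_pos hx.ge, ← sq_abs, ← hx]
    norm_num
  · rw [B2, if_neg (not_le.2 hx), if_pos h₂]

theorem B2_of_three_halves_le_abs {x : ℝ} (h : 3/2 ≤ |x|) : B2 x = 0 := by
  rcases h.eq_or_lt with hx | hx
  · rw [B2_of_half_le_abs_of_abs_le_three_halves (by linarith) hx.ge, ← hx]
    norm_num
  · rw [B2, if_neg (by linarith), if_neg (by linarith)]

theorem B3_of_abs_le_one {t : ℝ} (h : |t| ≤ 1) : B3 t = (1/6) * (4 - 3*t^2*(2 - |t|)) := by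
  rw [B3, if_pos h]

theorem B3_of_one_le_abs_of_abs_le_two {t : ℝ} (h₁ : 1 ≤ |t|) (h₂ : |t| ≤ 2) :
    B3 t = (1/6) * (2 - |t|)^3 := by
  rcases h₁.eq_or_lt with ht | ht
  · rw [B3, if_pos ht.ge, ← sq_abs, ← ht]
    norm_num
  · rw [B3, if_neg (not_le.2 ht), if_pos h₂]

theorem B3_of_two_le_abs {t : ℝ} (h : 2 ≤ |t|) : B3 t = 0 := by
  rcases h.eq_or_lt with ht | ht
  · rw [B3_of_one_le_abs_of_abs_le_two (by linarith) ht.ge, ← ht]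
    norm_num
  · rw [B3, if_neg (by linarith), if_neg (by linarith)]

theorem B3_eq_fourthCentralDiff (t : ℝ) :
    B3 t = fourthCentralDiff (fun x => x⁺ ^ 3) t / 6 := by
  obtain h | h | h | h | h | h : t ≤ -2 ∨ (-2 ≤ t ∧ t ≤ -1) ∨ (-1 ≤ t ∧ t ≤ 0) ∨
      (0 ≤ t ∧ t ≤ 1) ∨ (1 ≤ t ∧ t ≤ 2) ∨ 2 ≤ t := by grind
  all_goals
    simp (disch := grind) only [B3_of_abs_le_one, B3_of_one_le_abs_of_abs_le_two, B3_of_two_le_abs,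
      abs_of_nonneg, abs_of_nonpos, fourthCentralDiff, posPart_of_nonneg, posPart_of_nonpos]
    ring

theorem B2_eq_thirdCentralDiff (x : ℝ) :
    B2 x = thirdCentralDiff (fun y => y⁺ ^ 2) x / 2 := by
  obtain h | h | h | h | h : x ≤ -3/2 ∨ (-3/2 ≤ x ∧ x ≤ -1/2) ∨ (-1/2 ≤ x ∧ x ≤ 1/2) ∨
      (1/2 ≤ x ∧ x ≤ 3/2) ∨ 3/2 ≤ x := by grind
  all_goals
    simp (disch := grind) only [B2_of_abs_le_half, B2_of_half_le_abs_of_abs_le_three_halves,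
      B2_of_three_halves_le_abs, abs_of_nonneg, abs_of_nonpos, thirdCentralDiff, posPart_of_nonneg,
      posPart_of_nonpos]
    ring

/-- For every real `t`, the cubic uniform B-spline `B3` is differentiable at `t`
with derivative `B2 (t + 1/2) - B2 (t - 1/2)`. -/
theorem hasDerivAt_B3 (t : ℝ) :
    HasDerivAt B3 (B2 (t + 1/2) - B2 (t - 1/2)) t := by
  have hB3 : B3 = fun x => fourthCentralDiff (fun y => y⁺ ^ 3) x / 6 :=
    funext B3_eq_fourthCentralDiff
  have hB2 : B2 (t + 1/2) - B2 (t - 1/2) = fourthCentralDiff (fun y => 3 * y⁺ ^ 2) t / 6 := by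
    rw [B2_eq_thirdCentralDiff, B2_eq_thirdCentralDiff, ← sub_div,
      thirdCentralDiff_add_half_sub_thirdCentralDiff_sub_half]
    simp only [fourthCentralDiff]
    ring
  rw [hB3, hB2]
  exact ((hasDerivAt_fourthCentralDiff (hasDerivAt_posPart_pow two_ne_zero) t).div_const 6)
    |>.congr_deriv (by norm_num)
end

section
/- (Incompressibility error of the Euler approximation of the Lie exponential.) Let v : ℝ³ → ℝ³ be Fréchet differentiable everywhere, let K ≥ 1 be a natural number, and consider one Euler step f(x) = x + (1/K)·v(x). Let m₀ = m and m_{k+1} = f(m_k) for k < K. Suppose ε ≥ 0 and L ≥ 0 are such that for every k < K the divergence of v at m_k satisfies |div v(m_k)| ≤ ε and every entry of the Jacobian matrix Dv(m_k) has absolute value at most L. Then the K-fold composition f∘…∘f (the Euler approximation of exp(v)) is Fréchet differentiable at m and the determinant of its derivative at m satisfies |det D(f^{∘K})(m) − 1| ≤ exp(ε + 6L²/K + 6L³/K²) − 1. -/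
/-!
Each Euler step `f = id + τ • v` has derivative `1 + τ • Dv`, whose determinant for a `3 × 3`
matrix expands as `1 + τ tr Dv + τ² σ₂(Dv) + τ³ det Dv`, with `σ₂` the sum of the principal
`2 × 2` minors. Bounding the trace by `ε` and the minors entrywise by `L` puts every one-step
Jacobian determinant within `a = τ ε + 6 τ² L² + 6 τ³ L³` of `1`. By the chain rule the Jacobian
determinant of `f^[K]` is the product of these along the orbit, and a product of `K` factors each
within `a` of `1` is within `exp (K a) - 1` of `1`; with `τ = 1 / K` this is the stated bound.
-/

/-- The Jacobian matrix of a map `v : ℝ³ → ℝ³` at a point `p`. -/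
noncomputable def jacobian (v : (Fin 3 → ℝ) → (Fin 3 → ℝ)) (p : Fin 3 → ℝ) :
    Matrix (Fin 3) (Fin 3) ℝ :=
  LinearMap.toMatrix' (fderiv ℝ v p).toLinearMap

open Finset

theorem norm_prod_sub_one_le_prod_one_add_norm_sub_one {ι R : Type*} [SeminormedCommRing R]
    [NormOneClass R] (s : Finset ι) (x : ι → R) :
    ‖∏ i ∈ s, x i - 1‖ ≤ ∏ i ∈ s, (1 + ‖x i - 1‖) - 1 := by
  classical
  induction s using Finset.induction_on with
  | empty => simp
  | insert a s ha ih =>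
    set P := ∏ i ∈ s, x i
    set Q := ∏ i ∈ s, (1 + ‖x i - 1‖)
    have hP : ‖P‖ ≤ Q := by
      have := norm_le_norm_add_norm_sub' P 1
      rw [norm_one] at this
      linarith
    rw [prod_insert ha, prod_insert ha]
    calc ‖x a * P - 1‖ = ‖(x a - 1) * P + (P - 1)‖ := by ring_nf
      _ ≤ ‖x a - 1‖ * ‖P‖ + ‖P - 1‖ :=
        (norm_add_le _ _).trans (add_le_add_left (norm_mul_le _ _) _)
      _ ≤ ‖x a - 1‖ * Q + (Q - 1) := by gcongr
      _ = (1 + ‖x a - 1‖) * Q - 1 := by ring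

theorem norm_prod_sub_one_le_exp_sum_sub_one {ι R : Type*} [SeminormedCommRing R]
    [NormOneClass R] (s : Finset ι) (x : ι → R) :
    ‖∏ i ∈ s, x i - 1‖ ≤ Real.exp (∑ i ∈ s, ‖x i - 1‖) - 1 :=
  (norm_prod_sub_one_le_prod_one_add_norm_sub_one s x).trans <|
    sub_le_sub_right (Real.prod_one_add_le_exp_sum s fun _ ↦ norm_nonneg _) 1

section Derivatives

variable {𝕜 E : Type*} [NontriviallyNormedField 𝕜] [NormedAddCommGroup E] [NormedSpace 𝕜 E]

theorem det_fderiv_iterate {f : E → E} (hf : Differentiable 𝕜 f) (n : ℕ) (x : E) :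
    LinearMap.det (fderiv 𝕜 f^[n] x : E →ₗ[𝕜] E) =
      ∏ k ∈ range n, LinearMap.det (fderiv 𝕜 f (f^[k] x) : E →ₗ[𝕜] E) := by
  induction n with
  | zero => simp
  | succ n ih =>
    rw [Function.iterate_succ', fderiv_comp x (hf _) (hf.iterate n x),
      ContinuousLinearMap.toLinearMap_comp, LinearMap.det_comp, ih, prod_range_succ, mul_comm]

theorem fderiv_id_add_const_smul {v : E → E} {x : E} (hv : DifferentiableAt 𝕜 v x) (c : 𝕜) :
    fderiv 𝕜 (fun y ↦ y + c • v y) x = ContinuousLinearMap.id 𝕜 E + c • fderiv 𝕜 v x := by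
  rw [fderiv_fun_add differentiableAt_fun_id (hv.fun_const_smul c), fderiv_fun_id,
    fderiv_fun_const_smul hv]

end Derivatives

theorem det_fderiv_id_add_const_smul {v : (Fin 3 → ℝ) → (Fin 3 → ℝ)} {p : Fin 3 → ℝ}
    (hv : DifferentiableAt ℝ v p) (c : ℝ) :
    LinearMap.det (fderiv ℝ (fun x ↦ x + c • v x) p : (Fin 3 → ℝ) →ₗ[ℝ] Fin 3 → ℝ) =
      (1 + c • jacobian v p).det := by
  rw [fderiv_id_add_const_smul hv, ← LinearMap.det_toMatrix']
  simp [jacobian]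

theorem Matrix.det_one_add_smul_fin_three {R : Type*} [CommRing R] (τ : R)
    (M : Matrix (Fin 3) (Fin 3) R) :
    (1 + τ • M).det = 1 + τ * M.trace
      + τ ^ 2 * ∑ i : Fin 3, (M.submatrix i.succAbove i.succAbove).det + τ ^ 3 * M.det := by
  have h21 : (2 : Fin 3).succAbove 1 = 1 := rfl
  simp [Fin.sum_univ_three, Matrix.det_fin_two, Matrix.det_fin_three, Matrix.trace_fin_three, h21]
  ring

theorem abs_det_one_add_smul_sub_one_le (M : Matrix (Fin 3) (Fin 3) ℝ) {τ ε L : ℝ} (hτ : 0 ≤ τ)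
    (hε : |M.trace| ≤ ε) (hL : ∀ i j, |M i j| ≤ L) :
    |(1 + τ • M).det - 1| ≤ τ * ε + τ ^ 2 * (6 * L ^ 2) + τ ^ 3 * (6 * L ^ 3) := by
  set σ₂ := ∑ i : Fin 3, (M.submatrix i.succAbove i.succAbove).det
  have hminor (i : Fin 3) : |(M.submatrix i.succAbove i.succAbove).det| ≤ 2 * L ^ 2 := by
    refine (Matrix.det_le (abv := AbsoluteValue.abs) (A := M.submatrix _ _)
      fun j k ↦ hL _ _).trans_eq ?_
    simp
  have hσ₂ : |σ₂| ≤ 6 * L ^ 2 :=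
    calc |σ₂| ≤ ∑ i : Fin 3, |(M.submatrix i.succAbove i.succAbove).det| :=
          abs_sum_le_sum_abs _ _
      _ ≤ ∑ _i : Fin 3, 2 * L ^ 2 := sum_le_sum fun i _ ↦ hminor i
      _ = 6 * L ^ 2 := by
          rw [sum_const, card_univ, Fintype.card_fin, nsmul_eq_mul]
          ring
  have hdet : |M.det| ≤ 6 * L ^ 3 := by
    simpa [Nat.factorial] using Matrix.det_le (abv := AbsoluteValue.abs) hL
  rw [Matrix.det_one_add_smul_fin_three,
    show ∀ a b c : ℝ, 1 + a + b + c - 1 = a + b + c from fun _ _ _ ↦ by ring]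
  calc _ ≤ |τ * M.trace| + |τ ^ 2 * σ₂| + |τ ^ 3 * M.det| := abs_add_three _ _ _
    _ ≤ _ := by
      simp only [abs_mul, abs_pow, abs_of_nonneg hτ]
      gcongr

theorem euler_incompressibility_error_general (v : (Fin 3 → ℝ) → (Fin 3 → ℝ))
    (hv : Differentiable ℝ v) (K : ℕ) (hK : 1 ≤ K)
    (f : (Fin 3 → ℝ) → (Fin 3 → ℝ))
    (hf : f = fun x => x + (1 / (K : ℝ)) • v x)
    (m : Fin 3 → ℝ) (ε L : ℝ)
    (hdiv : ∀ k < K, |(jacobian v (f^[k] m)).trace| ≤ ε)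
    (hentries : ∀ k < K, ∀ i j : Fin 3, |jacobian v (f^[k] m) i j| ≤ L) :
    DifferentiableAt ℝ (f^[K]) m ∧
    |LinearMap.det (fderiv ℝ (f^[K]) m).toLinearMap - 1| ≤
      Real.exp (ε + 6 * L^2 / K + 6 * L^3 / K^2) - 1 := by
  set τ : ℝ := 1 / K
  set a := τ * ε + τ ^ 2 * (6 * L ^ 2) + τ ^ 3 * (6 * L ^ 3)
  have hfd : Differentiable ℝ f := hf ▸ differentiable_id.add (hv.const_smul τ)
  have hstep : ∀ k < K, |LinearMap.det (fderiv ℝ f (f^[k] m)).toLinearMap - 1| ≤ a := by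
    intro k hk
    rw [hf, det_fderiv_id_add_const_smul (hv _), ← hf]
    exact abs_det_one_add_smul_sub_one_le _ (by positivity) (hdiv k hk) (hentries k hk)
  have hKa : K * a = ε + 6 * L ^ 2 / K + 6 * L ^ 3 / K ^ 2 := by
    have : (K : ℝ) ≠ 0 := Nat.cast_ne_zero.2 (Nat.one_le_iff_ne_zero.1 hK)
    simp only [a, τ]
    field_simp
  refine ⟨hfd.iterate K m, ?_⟩
  calc _ = |∏ k ∈ range K, LinearMap.det (fderiv ℝ f (f^[k] m)).toLinearMap - 1| := by
        rw [det_fderiv_iterate hfd]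
    _ ≤ Real.exp (∑ k ∈ range K, |LinearMap.det (fderiv ℝ f (f^[k] m)).toLinearMap - 1|) - 1 :=
        by simpa only [Real.norm_eq_abs] using norm_prod_sub_one_le_exp_sum_sub_one (R := ℝ) _ _
    _ ≤ Real.exp (∑ _k ∈ range K, a) - 1 := by
        gcongr with k hk
        exact hstep k (mem_range.1 hk)
    _ = _ := by rw [sum_const, card_range, nsmul_eq_mul, hKa]

/-- **Incompressibility error of the Euler approximation of the Lie exponential.**
Let `v : ℝ³ → ℝ³` be differentiable, `K ≥ 1`, and `f x = x + (1/K) • v x` one Euler step.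
If along the Euler iterates `m_k = f^[k] m` (for `k < K`) the divergence of `v` is bounded
by `ε` and the Jacobian entries of `v` are bounded by `L`, then the `K`-fold composition
`f^[K]` is differentiable at `m` and
`|det D(f^[K])(m) - 1| ≤ exp (ε + 6L²/K + 6L³/K²) - 1`. -/
theorem euler_incompressibility_error (v : (Fin 3 → ℝ) → (Fin 3 → ℝ))
    (hv : Differentiable ℝ v) (K : ℕ) (hK : 1 ≤ K)
    (f : (Fin 3 → ℝ) → (Fin 3 → ℝ))
    (hf : f = fun x => x + (1 / (K : ℝ)) • v x)
    (m : Fin 3 → ℝ) (ε L : ℝ) (hε : 0 ≤ ε) (hL : 0 ≤ L)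
    (hdiv : ∀ k < K, |(jacobian v (f^[k] m)).trace| ≤ ε)
    (hentries : ∀ k < K, ∀ i j : Fin 3, |jacobian v (f^[k] m) i j| ≤ L) :
    DifferentiableAt ℝ (f^[K]) m ∧
    |LinearMap.det (fderiv ℝ (f^[K]) m).toLinearMap - 1| ≤
      Real.exp (ε + 6 * L^2 / K + 6 * L^3 / K^2) - 1 :=
  euler_incompressibility_error_general v hv K hK f hf m ε L hdiv hentries
end
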